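/- arXiv:2201.00039 — 3 statements merged into one kernel-verified Lean document; each statement's English description precedes it below -/
import Mathlib

section
/- Every nonnegative vector mu in R^{|S||A|} satisfying the Bellman flow constraints (B - gamma P)^T mu = nu_0 is the occupancy measure of the stationary Markov policy pi_mu defined by pi_mu(a|x) = mu(x,a) / sum_{a'} mu(x,a') (uniform where the denominator is zero); that is, mu^{pi_mu} = mu. -/
open BigOperators Matrix

/-- The matrix `Mᵖ` encoding a stationary Markov policy. -/
def policyMatrix {S A : Type*} [DecidableEq S] (π : S → A → ℝ) : Matrix S (S × A) ℝ :=
  fun x q => if q.1 = x then π x q.2 else 0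

/-- The binary matrix `B` with `B_{(x,a),x'} = 1` iff `x = x'`. -/
def flowB {S A : Type*} [DecidableEq S] : Matrix (S × A) S ℝ :=
  fun q x => if q.1 = x then 1 else 0

/-- The policy obtained from a vector `u ∈ ℝ^{|S||A|}` by statewise normalization:
`π_u(a|x) = u(x,a) / ∑_{a'} u(x,a')`, and the uniform distribution where the
denominator vanishes. -/
noncomputable def normPolicy {S A : Type*} [Fintype A] (u : S × A → ℝ) : S → A → ℝ :=
  fun x a =>
    if (∑ a' : A, u (x, a')) = 0 then (Fintype.card A : ℝ)⁻¹
    else u (x, a) / ∑ a' : A, u (x, a')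

/-- Every nonnegative vector `μ` satisfying the Bellman flow constraints
`(B - γP)ᵀ μ = ν₀` is the occupancy measure of the stationary Markov policy `π_μ`
obtained by statewise normalization of `μ`: that is, `μ^{π_μ} = μ`. -/
theorem flow_feasible_is_occupancy_measure
    {S A : Type*} [Fintype S] [Fintype A] [DecidableEq S] [DecidableEq A] [Nonempty A]
    (P : Matrix (S × A) S ℝ) (ν0 : S → ℝ) (γ : ℝ)
    (hγ : 0 < γ ∧ γ < 1)
    (hP : ∀ q x, 0 ≤ P q x) (hPs : ∀ q, ∑ x, P q x = 1)
    (hν : ∀ x, 0 ≤ ν0 x) (hνs : ∑ x, ν0 x = 1)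
    (μ : S × A → ℝ)
    (hpos : ∀ q, 0 ≤ μ q)
    (hflow : (flowB - γ • P)ᵀ *ᵥ μ = ν0) :
    ∀ q : S × A,
      μ q = ∑' t : ℕ,
        γ ^ t *
          (ν0 ᵥ* (policyMatrix (normPolicy μ) * (P * policyMatrix (normPolicy μ)) ^ t)) q := by
  obtain ⟨hγ0, hγ1⟩ := hγ
  set π : S → A → ℝ := normPolicy μ with hπdef
  set M : Matrix S (S × A) ℝ := policyMatrix π with hMdef
  set Q : Matrix S S ℝ := M * P with hQdef
  set s : S → ℝ := fun x => ∑ a, μ (x, a) with hsdef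
  have hsnn : ∀ x, 0 ≤ s x := fun x => Finset.sum_nonneg fun a _ => hpos (x, a)
  have hπnn : ∀ x a, 0 ≤ π x a := by
    intro x a
    simp only [hπdef, normPolicy]
    split
    · positivity
    · exact div_nonneg (hpos (x, a)) (hsnn x)
  have hcard : (0 : ℝ) < (Fintype.card A : ℝ) := by
    exact_mod_cast Fintype.card_pos
  have hπsum : ∀ x, ∑ a, π x a = 1 := by
    intro x
    simp only [hπdef, normPolicy]
    by_cases h : (∑ a' : A, μ (x, a')) = 0
    · simp [h, Finset.sum_const, hcard.ne']
    · simp only [h, if_false]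
      rw [← Finset.sum_div, div_self h]
  have hμeq : ∀ x a, μ (x, a) = s x * π x a := by
    intro x a
    simp only [hπdef, normPolicy, hsdef]
    by_cases h : (∑ a' : A, μ (x, a')) = 0
    · have : μ (x, a) = 0 := by
        have := (Finset.sum_eq_zero_iff_of_nonneg
          (fun a' _ => hpos (x, a'))).mp h a (Finset.mem_univ a)
        exact this
      simp [h, this]
    · simp only [h, if_false]
      field_simp
  have hvM : ∀ (v : S → ℝ) (q : S × A), (v ᵥ* M) q = v q.1 * π q.1 q.2 := by
    intro v q
    simp only [hMdef, policyMatrix, Matrix.vecMul, dotProduct]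
    rw [Finset.sum_eq_single q.1]
    · simp
    · intro b _ hb; simp [Ne.symm hb]
    · intro h; exact absurd (Finset.mem_univ q.1) h
  have hQentry : ∀ x y, Q x y = ∑ a, π x a * P (x, a) y := by
    intro x y
    simp only [hQdef, Matrix.mul_apply, hMdef, policyMatrix]
    rw [Fintype.sum_prod_type]
    rw [Finset.sum_eq_single x]
    · simp
    · intro b _ hb; simp [hb]
    · simp
  have hQnn : ∀ x y, 0 ≤ Q x y := by
    intro x y
    rw [hQentry]
    exact Finset.sum_nonneg fun a _ => mul_nonneg (hπnn x a) (hP (x, a) y)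
  have hQsum : ∀ x, ∑ y, Q x y = 1 := by
    intro x
    simp only [hQentry]
    rw [Finset.sum_comm]
    simp_rw [← Finset.mul_sum, hPs, mul_one]
    exact hπsum x
  have hQpow : ∀ n, (∀ x y, 0 ≤ (Q ^ n) x y) ∧ (∀ x, ∑ y, (Q ^ n) x y = 1) := by
    intro n
    induction n with
    | zero => constructor <;> intro x <;> simp [Matrix.one_apply]
      <;> intro y <;> split <;> norm_num
    | succ n ih =>
      constructor
      · intro x y
        rw [pow_succ, Matrix.mul_apply]
        exact Finset.sum_nonneg fun z _ => mul_nonneg (ih.1 x z) (hQnn z y)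
      · intro x
        rw [pow_succ]
        simp only [Matrix.mul_apply]
        rw [Finset.sum_comm]
        simp_rw [← Finset.mul_sum, hQsum, mul_one]
        exact ih.2 x
  have hsQ : ∀ x, (s ᵥ* Q) x = ∑ q, μ q * P q x := by
    intro x
    simp only [Matrix.vecMul, dotProduct, hQentry]
    rw [Fintype.sum_prod_type]
    refine Finset.sum_congr rfl fun y _ => ?_
    rw [Finset.mul_sum]
    refine Finset.sum_congr rfl fun a _ => ?_
    rw [← mul_assoc, ← hμeq y a]
  have hflow' : ∀ x, s x = ν0 x + γ * (s ᵥ* Q) x := by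
    intro x
    have h0 := congrFun hflow x
    simp only [Matrix.mulVec, dotProduct, Matrix.transpose_apply, Matrix.sub_apply,
      Matrix.smul_apply, smul_eq_mul, sub_mul] at h0
    rw [Finset.sum_sub_distrib] at h0
    have hB : ∑ q : S × A, flowB q x * μ q = s x := by
      simp only [flowB]
      rw [Fintype.sum_prod_type]
      rw [Finset.sum_eq_single x]
      · simp; rfl
      · intro b _ hb; simp [hb]
      · simp
    have hγP : ∑ q : S × A, γ * P q x * μ q = γ * ∑ q : S × A, μ q * P q x := by
      rw [Finset.mul_sum]
      refine Finset.sum_congr rfl fun q _ => ?_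
      ring
    rw [hB, hγP] at h0
    rw [hsQ x, ← h0]
    ring
  have hpartial : ∀ n x, ∑ t ∈ Finset.range n, γ ^ t * (ν0 ᵥ* Q ^ t) x
      = s x - γ ^ n * (s ᵥ* Q ^ n) x := by
    intro n
    induction n with
    | zero => intro x; simp
    | succ n ih =>
      intro x
      rw [Finset.sum_range_succ, ih x]
      have key : γ ^ n * (ν0 ᵥ* Q ^ n) x - γ ^ n * (s ᵥ* Q ^ n) x
          = - (γ ^ (n + 1) * (s ᵥ* Q ^ (n + 1)) x) := by
        have h1 : (ν0 ᵥ* Q ^ n) x - (s ᵥ* Q ^ n) x = -γ * ((s ᵥ* Q) ᵥ* Q ^ n) x := by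
          simp only [Matrix.vecMul, dotProduct]
          rw [← Finset.sum_sub_distrib, Finset.mul_sum]
          refine Finset.sum_congr rfl fun y _ => ?_
          have hy : ν0 y - s y = -γ * (s ᵥ* Q) y := by
            have := hflow' y; linarith
          rw [← sub_mul, hy]
          simp only [Matrix.vecMul, dotProduct]
          ring
        have h2 : (s ᵥ* Q ^ (n + 1)) x = ((s ᵥ* Q) ᵥ* Q ^ n) x := by
          rw [pow_succ']
          rw [← Matrix.vecMul_vecMul]
        rw [h2]
        rw [← mul_sub, h1]
        ring
      linarith [key]
  have hQnn' : ∀ n y x, (Q ^ n) y x ≤ 1 := by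
    intro n y x
    calc (Q ^ n) y x ≤ ∑ z, (Q ^ n) y z :=
          Finset.single_le_sum (fun z _ => (hQpow n).1 y z) (Finset.mem_univ x)
      _ = 1 := (hQpow n).2 y
  have hνQnn : ∀ n x, 0 ≤ (ν0 ᵥ* Q ^ n) x := by
    intro n x
    exact Finset.sum_nonneg fun y _ => mul_nonneg (hν y) ((hQpow n).1 y x)
  have hsQbound : ∀ n x, (s ᵥ* Q ^ n) x ≤ ∑ y, s y := by
    intro n x
    refine Finset.sum_le_sum fun y _ => ?_
    calc s y * (Q ^ n) y x ≤ s y * 1 :=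
          mul_le_mul_of_nonneg_left (hQnn' n y x) (hsnn y)
      _ = s y := mul_one _
  have hsQnn : ∀ n x, 0 ≤ (s ᵥ* Q ^ n) x := fun n x =>
    Finset.sum_nonneg fun y _ => mul_nonneg (hsnn y) ((hQpow n).1 y x)
  have hHasSum : ∀ x, HasSum (fun t => γ ^ t * (ν0 ᵥ* Q ^ t) x) (s x) := by
    intro x
    rw [hasSum_iff_tendsto_nat_of_nonneg
      (fun t => mul_nonneg (pow_nonneg hγ0.le t) (hνQnn t x))]
    simp_rw [hpartial]
    have hzero : Filter.Tendsto (fun n => γ ^ n * (s ᵥ* Q ^ n) x) Filter.atTop (nhds 0) := by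
      have hb : ∀ n, γ ^ n * (s ᵥ* Q ^ n) x ≤ (∑ y, s y) * γ ^ n := by
        intro n
        calc γ ^ n * (s ᵥ* Q ^ n) x ≤ γ ^ n * ∑ y, s y :=
              mul_le_mul_of_nonneg_left (hsQbound n x) (pow_nonneg hγ0.le n)
          _ = (∑ y, s y) * γ ^ n := mul_comm _ _
      have ht : Filter.Tendsto (fun n : ℕ => (∑ y, s y) * γ ^ n) Filter.atTop (nhds 0) := by
        have := (tendsto_pow_atTop_nhds_zero_of_lt_one hγ0.le hγ1).const_mul (∑ y, s y)
        simpa using this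
      exact squeeze_zero (fun n => mul_nonneg (pow_nonneg hγ0.le n) (hsQnn n x)) hb ht
    have hfin := Filter.Tendsto.sub (tendsto_const_nhds (x := s x) (f := Filter.atTop)) hzero
    simpa using hfin
  have hcomm : ∀ t : ℕ, M * (P * M) ^ t = Q ^ t * M := by
    intro t
    induction t with
    | zero => simp
    | succ t ih =>
      rw [pow_succ, ← Matrix.mul_assoc, ih, pow_succ, hQdef]
      simp only [Matrix.mul_assoc]
  intro q
  have : μ q = s q.1 * π q.1 q.2 := hμeq q.1 q.2
  rw [this, ← (hHasSum q.1).tsum_eq, ← tsum_mul_right]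
  congr 1
  ext t
  rw [hcomm t, ← Matrix.vecMul_vecMul, hvM]
  ring
end

section
/- For any vector u in R^{|S||A|}, the occupancy measure mu^{pi_u} of the policy pi_u obtained by normalizing the positive part of u satisfies ||mu^{pi_u} - u||_1 ≤ (2 ||[u]_-||_1 + ||(B - gamma P)^T u - nu_0||_1) / (1 - gamma). -/
open BigOperators Matrix

set_option linter.unusedSectionVars false

/-- The policy `π_u` obtained by statewise normalization of the positive part of `u`,
taking the uniform distribution on states where `[u]₊` vanishes. -/
noncomputable def posPolicy {S A : Type*} [Fintype A] (u : S × A → ℝ) : S → A → ℝ :=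
  fun x a =>
    if (∑ a' : A, max (u (x, a')) 0) = 0 then (Fintype.card A : ℝ)⁻¹
    else max (u (x, a)) 0 / ∑ a' : A, max (u (x, a')) 0

section Aux

variable {S A : Type*} [Fintype S] [Fintype A] [DecidableEq S] [Nonempty A]

lemma posPolicy_nonneg (u : S × A → ℝ) (x : S) (a : A) : 0 ≤ posPolicy u x a := by
  unfold posPolicy
  split
  · positivity
  · exact div_nonneg (le_max_right _ _)
      (Finset.sum_nonneg fun _ _ => le_max_right _ _)

lemma sum_posPolicy (u : S × A → ℝ) (x : S) : ∑ a, posPolicy u x a = 1 := by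
  unfold posPolicy
  by_cases h : (∑ a' : A, max (u (x, a')) 0) = 0
  · simp only [h, if_true, Finset.sum_const, Finset.card_univ, nsmul_eq_mul]
    rw [mul_inv_cancel₀]
    exact_mod_cast Fintype.card_ne_zero
  · simp only [h, if_false]
    rw [← Finset.sum_div, div_self h]

lemma max_eq_posPolicy_mul (u : S × A → ℝ) (q : S × A) :
    max (u q) 0 = posPolicy u q.1 q.2 * ∑ a' : A, max (u (q.1, a')) 0 := by
  unfold posPolicy
  by_cases h : (∑ a' : A, max (u (q.1, a')) 0) = 0
  · have h0 : max (u q) 0 = 0 := by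
      have := (Finset.sum_eq_zero_iff_of_nonneg
        (fun a _ => le_max_right (u (q.1, a)) 0)).mp h q.2 (Finset.mem_univ _)
      simpa using this
    simp [h, h0]
  · simp only [h, if_false]
    rw [div_mul_cancel₀ _ h]

lemma vecMul_policyMatrix (π : S → A → ℝ) (v : S → ℝ) (q : S × A) :
    (v ᵥ* policyMatrix π) q = v q.1 * π q.1 q.2 := by
  simp only [vecMul, dotProduct, policyMatrix, mul_ite, mul_zero]
  rw [Finset.sum_ite_eq Finset.univ q.1 (fun x => v x * π x q.2)]
  simp

lemma sum_policyMatrix_row (π : S → A → ℝ) (hπ : ∀ x, ∑ a, π x a = 1) (x : S) :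
    ∑ q : S × A, policyMatrix π x q = 1 := by
  rw [Fintype.sum_prod_type]
  simp only [policyMatrix]
  have : ∀ x' : S, (∑ a : A, if x' = x then π x a else 0)
      = if x' = x then ∑ a : A, π x a else 0 := by
    intro x'; split <;> simp
  rw [Finset.sum_congr rfl fun x' _ => this x',
    Finset.sum_ite_eq' Finset.univ x (fun _ => ∑ a : A, π x a)]
  simp [hπ]

end Aux

section Stoch

variable {n m : Type*} [Fintype n] [Fintype m]

lemma vecMul_nonneg' (Q : Matrix m n ℝ) (hQ0 : ∀ i j, 0 ≤ Q i j)
    (v : m → ℝ) (hv : ∀ i, 0 ≤ v i) (j : n) : 0 ≤ (v ᵥ* Q) j :=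
  Finset.sum_nonneg fun i _ => mul_nonneg (hv i) (hQ0 i j)

lemma sum_vecMul' (Q : Matrix m n ℝ) (hQ1 : ∀ i, ∑ j, Q i j = 1)
    (v : m → ℝ) : ∑ j, (v ᵥ* Q) j = ∑ i, v i := by
  simp only [vecMul, dotProduct]
  rw [Finset.sum_comm]
  simp [← Finset.mul_sum, hQ1]

lemma abs_vecMul_le (Q : Matrix m n ℝ) (hQ0 : ∀ i j, 0 ≤ Q i j)
    (hQ1 : ∀ i, ∑ j, Q i j = 1) (d : m → ℝ) :
    ∑ j, |(d ᵥ* Q) j| ≤ ∑ i, |d i| := by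
  have h1 : ∀ j, |(d ᵥ* Q) j| ≤ ∑ i, |d i| * Q i j := by
    intro j
    calc |(d ᵥ* Q) j| ≤ ∑ i, |d i * Q i j| := Finset.abs_sum_le_sum_abs _ _
    _ = ∑ i, |d i| * Q i j := by
        refine Finset.sum_congr rfl fun i _ => ?_
        rw [abs_mul, abs_of_nonneg (hQ0 i j)]
  calc ∑ j, |(d ᵥ* Q) j| ≤ ∑ j, ∑ i, |d i| * Q i j :=
        Finset.sum_le_sum fun j _ => h1 j
  _ = ∑ i, |d i| * ∑ j, Q i j := by rw [Finset.sum_comm]; simp [Finset.mul_sum]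
  _ = ∑ i, |d i| := by simp [hQ1]

lemma pow_stoch (Q : Matrix n n ℝ) (hQ0 : ∀ i j, 0 ≤ Q i j)
    (hQ1 : ∀ i, ∑ j, Q i j = 1) (t : ℕ) [DecidableEq n] :
    (∀ i j, 0 ≤ (Q ^ t) i j) ∧ (∀ i, ∑ j, (Q ^ t) i j = 1) := by
  induction t with
  | zero => simp [Matrix.one_apply]; intro i j; split <;> simp
  | succ t ih =>
    constructor
    · intro i j
      rw [pow_succ]
      exact Finset.sum_nonneg fun k _ => mul_nonneg (ih.1 i k) (hQ0 k j)
    · intro i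
      rw [pow_succ]
      simp only [Matrix.mul_apply]
      rw [Finset.sum_comm]
      simp [← Finset.mul_sum, hQ1, ih.2 i]

end Stoch

/-- For any `u ∈ ℝ^{|S||A|}`, the occupancy measure of `π_u` satisfies
`‖μ^{π_u} - u‖₁ ≤ (2‖[u]₋‖₁ + ‖(B - γP)ᵀ u - ν₀‖₁) / (1 - γ)`. -/
theorem occupancy_measure_flow_violation_bound
    {S A : Type*} [Fintype S] [Fintype A] [DecidableEq S] [DecidableEq A] [Nonempty A]
    (P : Matrix (S × A) S ℝ) (ν0 : S → ℝ) (γ : ℝ)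
    (hγ : 0 < γ ∧ γ < 1)
    (hP : ∀ q x, 0 ≤ P q x) (hPs : ∀ q, ∑ x, P q x = 1)
    (hν : ∀ x, 0 ≤ ν0 x) (hνs : ∑ x, ν0 x = 1)
    (u : S × A → ℝ) (μu : S × A → ℝ)
    (hμ : ∀ q, μu q = ∑' t : ℕ,
        γ ^ t * (ν0 ᵥ* (policyMatrix (posPolicy u) * (P * policyMatrix (posPolicy u)) ^ t)) q) :
    ∑ q : S × A, |μu q - u q| ≤
      (2 * ∑ q : S × A, max 0 (-(u q)) +
        ∑ x : S, |((flowB - γ • P)ᵀ *ᵥ u) x - ν0 x|) / (1 - γ) := by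
  obtain ⟨hγ0, hγ1⟩ := hγ
  set π : S → A → ℝ := posPolicy u with hπdef
  set M : Matrix S (S × A) ℝ := policyMatrix π with hMdef
  set Q : Matrix (S × A) (S × A) ℝ := P * M with hQdef
  have hπ0 : ∀ x a, 0 ≤ π x a := posPolicy_nonneg u
  have hπ1 : ∀ x, ∑ a, π x a = 1 := sum_posPolicy u
  have hM0 : ∀ x q, 0 ≤ M x q := by
    intro x q; simp only [hMdef, policyMatrix]; split
    · exact hπ0 _ _
    · exact le_refl 0
  have hM1 : ∀ x, ∑ q : S × A, M x q = 1 := sum_policyMatrix_row π hπ1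
  have hQ0 : ∀ q q', 0 ≤ Q q q' := by
    intro q q'
    exact Finset.sum_nonneg fun x _ => mul_nonneg (hP q x) (hM0 x q')
  have hQ1 : ∀ q, ∑ q', Q q q' = 1 := by
    intro q
    simp only [hQdef, Matrix.mul_apply]
    rw [Finset.sum_comm]
    simp [← Finset.mul_sum, hM1, hPs q]
  -- the sequence g
  set v0 : S × A → ℝ := ν0 ᵥ* M with hv0def
  have hv00 : ∀ q, 0 ≤ v0 q := by
    intro q
    rw [hv0def, hMdef, vecMul_policyMatrix]
    exact mul_nonneg (hν _) (hπ0 _ _)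
  have hv0s : ∑ q, v0 q = 1 := by
    rw [hv0def, sum_vecMul' M hM1, hνs]
  set g : ℕ → (S × A) → ℝ := fun t => v0 ᵥ* Q ^ t with hgdef
  have hg0 : ∀ t q, 0 ≤ g t q := fun t q =>
    vecMul_nonneg' (Q ^ t) (pow_stoch Q hQ0 hQ1 t).1 v0 hv00 q
  have hg1 : ∀ t, ∑ q, g t q = 1 := fun t =>
    (sum_vecMul' (Q ^ t) (pow_stoch Q hQ0 hQ1 t).2 v0).trans hv0s
  have hgle : ∀ t q, g t q ≤ 1 := by
    intro t q
    calc g t q ≤ ∑ q', g t q' :=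
      Finset.single_le_sum (fun q' _ => hg0 t q') (Finset.mem_univ q)
    _ = 1 := hg1 t
  have hμ' : ∀ q, μu q = ∑' t : ℕ, γ ^ t * g t q := by
    intro q
    rw [hμ q]
    refine tsum_congr fun t => ?_
    rw [hgdef]
    simp only [← Matrix.vecMul_vecMul]
    rfl
  have hsumm : ∀ q, Summable (fun t : ℕ => γ ^ t * g t q) := by
    intro q
    refine Summable.of_nonneg_of_le
      (fun t => mul_nonneg (pow_nonneg hγ0.le t) (hg0 t q))
      (fun t => ?_) (summable_geometric_of_lt_one hγ0.le hγ1)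
    calc γ ^ t * g t q ≤ γ ^ t * 1 :=
      mul_le_mul_of_nonneg_left (hgle t q) (pow_nonneg hγ0.le t)
    _ = γ ^ t := mul_one _
  -- the flow recursion for μu
  have hgsucc : ∀ t q, g (t + 1) q = ∑ q', g t q' * Q q' q := by
    intro t q
    rw [hgdef]
    show (v0 ᵥ* Q ^ (t + 1)) q = _
    rw [pow_succ, ← Matrix.vecMul_vecMul]
    simp [vecMul, dotProduct]
  have hrec : ∀ q, μu q = v0 q + γ * (μu ᵥ* Q) q := by
    intro q
    rw [hμ' q, Summable.tsum_eq_zero_add (hsumm q)]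
    have h0 : γ ^ 0 * g 0 q = v0 q := by
      simp [hgdef]
    rw [h0]
    congr 1
    have hstep : ∀ t : ℕ, γ ^ (t + 1) * g (t + 1) q
        = ∑ q', γ * (γ ^ t * g t q' * Q q' q) := by
      intro t
      rw [hgsucc t q, Finset.mul_sum]
      refine Finset.sum_congr rfl fun q' _ => ?_
      rw [pow_succ]; ring
    rw [tsum_congr hstep,
      Summable.tsum_finsetSum (fun q' _ => (((hsumm q').mul_right (Q q' q)).mul_left γ))]
    have : ∀ q', ∑' t : ℕ, γ * (γ ^ t * g t q' * Q q' q)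
        = γ * (μu q' * Q q' q) := by
      intro q'
      rw [tsum_mul_left, tsum_mul_right, ← hμ' q']
    rw [Finset.sum_congr rfl fun q' _ => this q', ← Finset.mul_sum]
    congr 1
  -- notation for the error terms
  set e : S → ℝ := fun x => ((flowB - γ • P)ᵀ *ᵥ u) x - ν0 x with hedef
  set w : S → ℝ := fun x => ∑ a : A, max 0 (-(u (x, a))) with hwdef
  set s : S → ℝ := fun x => ∑ a' : A, max (u (x, a')) 0 with hsdef
  have huP : ∀ x, (u ᵥ* P) x = ∑ q', u q' * P q' x := fun x => rfl
  have hsx : ∀ x, s x = e x + ν0 x + γ * (u ᵥ* P) x + w x := by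
    intro x
    have hB : ((flowB - γ • P)ᵀ *ᵥ u) x
        = (∑ a : A, u (x, a)) - γ * ∑ q', u q' * P q' x := by
      simp only [mulVec, dotProduct, Matrix.transpose_apply, Matrix.sub_apply,
        Matrix.smul_apply, smul_eq_mul, sub_mul, Finset.sum_sub_distrib]
      congr 1
      · rw [Fintype.sum_prod_type]
        simp only [flowB]
        have : ∀ x' : S, (∑ a : A, (if x' = x then (1:ℝ) else 0) * u (x', a))
            = if x' = x then ∑ a : A, u (x, a) else 0 := by
          intro x'; split
          · rename_i h; subst h; simp
          · simp
        rw [Finset.sum_congr rfl fun x' _ => this x',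
          Finset.sum_ite_eq' Finset.univ x (fun _ => ∑ a : A, u (x, a))]
        simp
      · rw [Finset.mul_sum]
        refine Finset.sum_congr rfl fun q' _ => ?_
        ring
    have hsw : s x - w x = ∑ a : A, u (x, a) := by
      rw [hsdef, hwdef]
      simp only [← Finset.sum_sub_distrib]
      refine Finset.sum_congr rfl fun a _ => ?_
      rcases le_total 0 (u (x, a)) with h | h
      · rw [max_eq_left h, max_eq_left (by linarith), sub_zero]
      · rw [max_eq_right h, max_eq_right (by linarith)]
        ring
    have he : e x = ((flowB - γ • P)ᵀ *ᵥ u) x - ν0 x := rfl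
    rw [he, hB, huP x, ← hsw]
    ring
  -- pointwise identity for u
  have huQ : ∀ q : S × A, (u ᵥ* Q) q = (u ᵥ* P) q.1 * π q.1 q.2 := by
    intro q
    rw [hQdef, ← Matrix.vecMul_vecMul, hMdef, vecMul_policyMatrix]
  have huid : ∀ q : S × A, u q = v0 q + γ * (u ᵥ* Q) q
      + ((e q.1 + w q.1) * π q.1 q.2 - max 0 (-(u q))) := by
    intro q
    have h1 : max (u q) 0 = π q.1 q.2 * s q.1 := max_eq_posPolicy_mul u q
    have h2 : max (u q) 0 - max 0 (-(u q)) = u q := by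
      rcases le_total 0 (u q) with h | h
      · rw [max_eq_left h, max_eq_left (by linarith), sub_zero]
      · rw [max_eq_right h, max_eq_right (by linarith)]; ring
    have h3 : v0 q = ν0 q.1 * π q.1 q.2 := by
      rw [hv0def, hMdef, vecMul_policyMatrix]
    rw [h3, huQ q]
    have h4 := hsx q.1
    linear_combination -h2 + h1 + π q.1 q.2 * h4
  -- the difference d
  set d : S × A → ℝ := fun q => u q - μu q with hddef
  have hdQ : ∀ q, (d ᵥ* Q) q = (u ᵥ* Q) q - (μu ᵥ* Q) q := by
    intro q
    simp [hddef, vecMul, dotProduct, sub_mul, Finset.sum_sub_distrib]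
  have hd : ∀ q, d q = γ * (d ᵥ* Q) q
      + ((e q.1 + w q.1) * π q.1 q.2 - max 0 (-(u q))) := by
    intro q
    rw [hdQ q, hddef]
    have := huid q
    have := hrec q
    simp only []
    linarith
  -- norm bounds
  set L : ℝ := ∑ q : S × A, |d q| with hLdef
  set W : ℝ := ∑ q : S × A, max 0 (-(u q)) with hWdef
  set E : ℝ := ∑ x : S, |e x| with hEdef
  have hwW : ∑ x : S, w x = W := by
    rw [hWdef, Fintype.sum_prod_type]
  have hDbound : ∑ q : S × A, |(e q.1 + w q.1) * π q.1 q.2 - max 0 (-(u q))|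
      ≤ E + 2 * W := by
    have step1 : ∀ q : S × A, |(e q.1 + w q.1) * π q.1 q.2 - max 0 (-(u q))|
        ≤ (|e q.1| + w q.1) * π q.1 q.2 + max 0 (-(u q)) := by
      intro q
      calc |(e q.1 + w q.1) * π q.1 q.2 - max 0 (-(u q))|
          ≤ |(e q.1 + w q.1) * π q.1 q.2| + |max 0 (-(u q))| := abs_sub _ _
      _ ≤ (|e q.1| + w q.1) * π q.1 q.2 + max 0 (-(u q)) := by
          gcongr ?_ + ?_
          · rw [abs_mul, abs_of_nonneg (hπ0 _ _)]
            gcongr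
            · exact hπ0 _ _
            calc |e q.1 + w q.1| ≤ |e q.1| + |w q.1| := abs_add_le _ _
            _ = |e q.1| + w q.1 := by
                have hw0 : 0 ≤ w q.1 := Finset.sum_nonneg fun a _ => le_max_left _ _
                rw [abs_of_nonneg hw0]
          · exact le_of_eq (abs_of_nonneg (le_max_left _ _))
    calc ∑ q : S × A, |(e q.1 + w q.1) * π q.1 q.2 - max 0 (-(u q))|
        ≤ ∑ q : S × A, ((|e q.1| + w q.1) * π q.1 q.2 + max 0 (-(u q))) :=
          Finset.sum_le_sum fun q _ => step1 q
    _ = (∑ q : S × A, (|e q.1| + w q.1) * π q.1 q.2) + W := by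
        rw [Finset.sum_add_distrib, hWdef]
    _ = (∑ x : S, (|e x| + w x)) + W := by
        congr 1
        rw [Fintype.sum_prod_type]
        refine Finset.sum_congr rfl fun x _ => ?_
        show (∑ a : A, (|e x| + w x) * π x a) = _
        rw [← Finset.mul_sum, hπ1 x, mul_one]
    _ = E + W + W := by rw [Finset.sum_add_distrib, hEdef, hwW]
    _ = E + 2 * W := by ring
  have hLbound : L ≤ γ * L + (E + 2 * W) := by
    calc L = ∑ q : S × A, |γ * (d ᵥ* Q) q
        + ((e q.1 + w q.1) * π q.1 q.2 - max 0 (-(u q)))| := by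
          rw [hLdef]
          exact Finset.sum_congr rfl fun q _ => by rw [hd q]
    _ ≤ ∑ q : S × A, (|γ * (d ᵥ* Q) q|
        + |(e q.1 + w q.1) * π q.1 q.2 - max 0 (-(u q))|) :=
          Finset.sum_le_sum fun q _ => abs_add_le _ _
    _ = γ * (∑ q : S × A, |(d ᵥ* Q) q|)
        + ∑ q : S × A, |(e q.1 + w q.1) * π q.1 q.2 - max 0 (-(u q))| := by
          have habs : ∀ q : S × A, |γ * (d ᵥ* Q) q| = γ * |(d ᵥ* Q) q| := fun q => by
            rw [abs_mul, abs_of_nonneg hγ0.le]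
          simp only [habs, Finset.sum_add_distrib, Finset.mul_sum]
    _ ≤ γ * L + (E + 2 * W) := by
          have hL' : ∑ q : S × A, |(d ᵥ* Q) q| ≤ L := by
            rw [hLdef]; exact abs_vecMul_le Q hQ0 hQ1 d
          exact add_le_add (mul_le_mul_of_nonneg_left hL' hγ0.le) hDbound
  -- conclude
  have hfinal : ∑ q : S × A, |μu q - u q| = L := by
    rw [hLdef]
    exact Finset.sum_congr rfl fun q _ => by rw [hddef, abs_sub_comm]
  rw [hfinal, le_div_iff₀ (by linarith : (0:ℝ) < 1 - γ)]
  nlinarith [hLbound]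
end

section
/- For any vector u in R^{|S||A|}, the l1-distance between the occupancy measure of pi_u and the positive part of u satisfies ||mu^{pi_u} - [u]_+||_1 ≤ ((1+gamma) ||[u]_-||_1 + ||(B - gamma P)^T u - nu_0||_1) / (1 - gamma). -/
set_option maxHeartbeats 1000000

open BigOperators Matrix

/-- Row-stochastic real matrices. -/
def IsStoch {m n : Type*} [Fintype n] (X : Matrix m n ℝ) : Prop :=
  (∀ i j, 0 ≤ X i j) ∧ ∀ i, ∑ j, X i j = 1

lemma IsStoch.mul {m n p : Type*} [Fintype n] [Fintype p] {X : Matrix m n ℝ}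
    {Y : Matrix n p ℝ} (hX : IsStoch X) (hY : IsStoch Y) : IsStoch (X * Y) := by
  refine ⟨fun i j => Finset.sum_nonneg fun k _ => mul_nonneg (hX.1 i k) (hY.1 k j), fun i => ?_⟩
  simp only [Matrix.mul_apply]
  rw [Finset.sum_comm]
  simp [← Finset.mul_sum, hY.2, hX.2 i]

lemma IsStoch.one {n : Type*} [Fintype n] [DecidableEq n] : IsStoch (1 : Matrix n n ℝ) := by
  constructor
  · intro i j
    by_cases h : i = j <;> simp [Matrix.one_apply, h]
  · intro i; simp [Matrix.one_apply]

lemma IsStoch.pow {n : Type*} [Fintype n] [DecidableEq n] {X : Matrix n n ℝ}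
    (hX : IsStoch X) : ∀ t : ℕ, IsStoch (X ^ t)
  | 0 => by rw [pow_zero]; exact IsStoch.one
  | t + 1 => by rw [pow_succ']; exact hX.mul (IsStoch.pow hX t)

lemma IsStoch.entry_le_one {m n : Type*} [Fintype n] {X : Matrix m n ℝ} (hX : IsStoch X)
    (i : m) (j : n) : X i j ≤ 1 := by
  rw [← hX.2 i]
  exact Finset.single_le_sum (fun k _ => hX.1 i k) (Finset.mem_univ j)

lemma abs_vecMul_le_s5 {m n : Type*} [Fintype m] {X : Matrix m n ℝ}
    (h0 : ∀ i j, 0 ≤ X i j) (h1 : ∀ i j, X i j ≤ 1) (v : m → ℝ) (j : n) :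
    |(v ᵥ* X) j| ≤ ∑ i, |v i| := by
  simp only [Matrix.vecMul, dotProduct]
  calc |∑ i, v i * X i j| ≤ ∑ i, |v i * X i j| := Finset.abs_sum_le_sum_abs _ _
    _ ≤ ∑ i, |v i| := Finset.sum_le_sum fun i _ => by
        rw [abs_mul, abs_of_nonneg (h0 i j)]
        exact mul_le_of_le_one_right (abs_nonneg _) (h1 i j)

lemma l1_contract {m n : Type*} [Fintype m] [Fintype n] {X : Matrix m n ℝ}
    (hX : IsStoch X) (v : m → ℝ) : ∑ j, |(v ᵥ* X) j| ≤ ∑ i, |v i| := by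
  simp only [Matrix.vecMul, dotProduct]
  calc ∑ j, |∑ i, v i * X i j| ≤ ∑ j, ∑ i, |v i| * X i j := by
        refine Finset.sum_le_sum fun j _ => ?_
        refine (Finset.abs_sum_le_sum_abs _ _).trans (le_of_eq ?_)
        refine Finset.sum_congr rfl fun i _ => ?_
        rw [abs_mul, abs_of_nonneg (hX.1 i j)]
    _ = ∑ i, |v i| * ∑ j, X i j := by rw [Finset.sum_comm]; simp [Finset.mul_sum]
    _ = ∑ i, |v i| := by simp [hX.2]

lemma posPolicy_stoch {S A : Type*} [Fintype A] [Nonempty A] (u : S × A → ℝ) (x : S) :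
    (∀ a, 0 ≤ posPolicy u x a) ∧ ∑ a, posPolicy u x a = 1 := by
  unfold posPolicy
  by_cases h : (∑ a' : A, max (u (x, a')) 0) = 0
  · simp only [h, if_true]
    refine ⟨fun a => by positivity, ?_⟩
    rw [Finset.sum_const, Finset.card_univ, nsmul_eq_mul]
    rw [mul_inv_cancel₀]
    exact_mod_cast Fintype.card_ne_zero
  · have hpos : 0 < ∑ a' : A, max (u (x, a')) 0 :=
      lt_of_le_of_ne (Finset.sum_nonneg fun a _ => le_max_right _ _) (Ne.symm h)
    simp only [h, if_false]
    refine ⟨fun a => div_nonneg (le_max_right _ _) hpos.le, ?_⟩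
    rw [← Finset.sum_div, div_self h]

lemma policyMatrix_stoch {S A : Type*} [Fintype S] [Fintype A] [DecidableEq S]
    (π : S → A → ℝ) (h0 : ∀ x a, 0 ≤ π x a) (h1 : ∀ x, ∑ a, π x a = 1) :
    IsStoch (policyMatrix π) := by
  constructor
  · intro x q
    unfold policyMatrix
    split
    · next hq => exact hq ▸ h0 q.1 q.2
    · exact le_refl _
  · intro x
    rw [Fintype.sum_prod_type]
    simp [policyMatrix, Finset.sum_ite_eq, h1]

lemma vecMul_flowB {S A : Type*} [Fintype S] [Fintype A] [DecidableEq S] (v : S × A → ℝ) :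
    v ᵥ* (flowB : Matrix (S × A) S ℝ) = fun x => ∑ a, v (x, a) := by
  funext x
  simp only [Matrix.vecMul, dotProduct, flowB]
  rw [Fintype.sum_prod_type]
  simp [Finset.sum_ite_eq]

lemma flowB_rowsum {S A : Type*} [Fintype S] [DecidableEq S] (q : S × A) :
    ∑ x, (flowB : Matrix (S × A) S ℝ) q x = 1 := by
  simp [flowB, Finset.sum_ite_eq]

lemma key_id {S A : Type*} [Fintype S] [Fintype A] [DecidableEq S] [Nonempty A]
    (u : S × A → ℝ) :
    (fun x => ∑ a, max (u (x, a)) 0) ᵥ* policyMatrix (posPolicy u) =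
      fun q => max (u q) 0 := by
  funext q
  obtain ⟨x, a⟩ := q
  simp only [Matrix.vecMul, dotProduct, policyMatrix]
  rw [Finset.sum_eq_single x]
  · simp only [if_pos rfl]
    unfold posPolicy
    by_cases h : (∑ a' : A, max (u (x, a')) 0) = 0
    · have : max (u (x, a)) 0 = 0 := by
        have := (Finset.sum_eq_zero_iff_of_nonneg
          (fun a _ => le_max_right (u (x, a)) 0)).mp h
        exact this a (Finset.mem_univ a)
      simp [h, this]
    · simp only [h, if_false, if_true]
      rw [mul_div_cancel₀ _ h]
  · intro x' _ hx'
    simp [Ne.symm hx']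
  · intro hx; exact absurd (Finset.mem_univ x) hx

lemma summable_series {S A : Type*} [Fintype S] [Fintype A]
    {M : Matrix S (S × A) ℝ} {P : Matrix (S × A) S ℝ} [DecidableEq S] [DecidableEq A]
    (hM : IsStoch M) (hPst : IsStoch P) {γ : ℝ} (hγ0 : 0 ≤ γ) (hγ1 : γ < 1)
    (v : S → ℝ) (q : S × A) :
    Summable (fun t : ℕ => γ ^ t * (v ᵥ* (M * (P * M) ^ t)) q) := by
  have hPM : IsStoch (P * M) := hPst.mul hM
  have hX : ∀ t, IsStoch (M * (P * M) ^ t) := fun t => hM.mul (hPM.pow t)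
  refine Summable.of_norm_bounded
    ((summable_geometric_of_lt_one hγ0 hγ1).mul_right (∑ x, |v x|)) fun t => ?_
  rw [Real.norm_eq_abs, abs_mul, abs_pow, abs_of_nonneg hγ0]
  exact mul_le_mul_of_nonneg_left
    (abs_vecMul_le_s5 (hX t).1 ((hX t).entry_le_one) v q) (pow_nonneg hγ0 t)

lemma l1_tsum_bound {S A : Type*} [Fintype S] [Fintype A] [DecidableEq S] [DecidableEq A]
    {M : Matrix S (S × A) ℝ} {P : Matrix (S × A) S ℝ}
    (hM : IsStoch M) (hPst : IsStoch P) {γ : ℝ} (hγ0 : 0 ≤ γ) (hγ1 : γ < 1) (w : S → ℝ) :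
    ∑ q : S × A, |∑' t : ℕ, γ ^ t * (w ᵥ* (M * (P * M) ^ t)) q| ≤
      (∑ x, |w x|) * (1 - γ)⁻¹ := by
  have hPM : IsStoch (P * M) := hPst.mul hM
  have hX : ∀ t, IsStoch (M * (P * M) ^ t) := fun t => hM.mul (hPM.pow t)
  have hgeoW : Summable (fun t : ℕ => γ ^ t * ∑ x, |w x|) :=
    (summable_geometric_of_lt_one hγ0 hγ1).mul_right _
  have hb : ∀ t q, |γ ^ t * (w ᵥ* (M * (P * M) ^ t)) q| ≤ γ ^ t * ∑ x, |w x| := fun t q => by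
    rw [abs_mul, abs_pow, abs_of_nonneg hγ0]
    exact mul_le_mul_of_nonneg_left
      (abs_vecMul_le_s5 (hX t).1 ((hX t).entry_le_one) w q) (pow_nonneg hγ0 t)
  have habs_sum : ∀ q : S × A, Summable (fun t => |γ ^ t * (w ᵥ* (M * (P * M) ^ t)) q|) :=
    fun q => Summable.of_nonneg_of_le (fun t => abs_nonneg _) (fun t => hb t q) hgeoW
  have hrow : ∀ t : ℕ, ∑ q : S × A, |γ ^ t * (w ᵥ* (M * (P * M) ^ t)) q| ≤
      γ ^ t * ∑ x, |w x| := by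
    intro t
    calc ∑ q : S × A, |γ ^ t * (w ᵥ* (M * (P * M) ^ t)) q|
        = γ ^ t * ∑ q : S × A, |(w ᵥ* (M * (P * M) ^ t)) q| := by
          rw [Finset.mul_sum]
          exact Finset.sum_congr rfl fun q _ => by
            rw [abs_mul, abs_pow, abs_of_nonneg hγ0]
      _ ≤ γ ^ t * ∑ x, |w x| :=
          mul_le_mul_of_nonneg_left (l1_contract (hX t) w) (pow_nonneg hγ0 t)
  calc ∑ q : S × A, |∑' t : ℕ, γ ^ t * (w ᵥ* (M * (P * M) ^ t)) q|
      ≤ ∑ q : S × A, ∑' t : ℕ, |γ ^ t * (w ᵥ* (M * (P * M) ^ t)) q| := by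
        refine Finset.sum_le_sum fun q _ => ?_
        have := norm_tsum_le_tsum_norm (f := fun t : ℕ => γ ^ t * (w ᵥ* (M * (P * M) ^ t)) q)
          (by simp only [Real.norm_eq_abs]; exact habs_sum q)
        simp only [Real.norm_eq_abs] at this
        exact this
    _ = ∑' t : ℕ, ∑ q : S × A, |γ ^ t * (w ᵥ* (M * (P * M) ^ t)) q| :=
        (Summable.tsum_finsetSum fun q _ => habs_sum q).symm
    _ ≤ ∑' t : ℕ, γ ^ t * ∑ x, |w x| := by
        refine Summable.tsum_le_tsum hrow ?_ hgeoW
        exact Summable.of_nonneg_of_le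
          (fun t => Finset.sum_nonneg fun q _ => abs_nonneg _) hrow hgeoW
    _ = (∑ x, |w x|) * (1 - γ)⁻¹ := by
        rw [tsum_mul_right, tsum_geometric_of_lt_one hγ0 hγ1, mul_comm]

lemma hasSum_posPart {S A : Type*} [Fintype S] [Fintype A] [DecidableEq S] [DecidableEq A]
    [Nonempty A] {P : Matrix (S × A) S ℝ} (hPst : IsStoch P)
    {γ : ℝ} (hγ0 : 0 ≤ γ) (hγ1 : γ < 1) (u : S × A → ℝ) (q : S × A) :
    HasSum (fun t : ℕ => γ ^ t *
        (((fun p => max (u p) 0) ᵥ* (flowB - γ • P)) ᵥ*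
          (policyMatrix (posPolicy u) * (P * policyMatrix (posPolicy u)) ^ t)) q)
      (max (u q) 0) := by
  set M : Matrix S (S × A) ℝ := policyMatrix (posPolicy u) with hMdef
  have hM : IsStoch M :=
    policyMatrix_stoch _ (fun x a => (posPolicy_stoch u x).1 a) fun x => (posPolicy_stoch u x).2
  have hPM : IsStoch (P * M) := hPst.mul hM
  have hPMt : ∀ t : ℕ, IsStoch ((P * M) ^ t) := hPM.pow
  set up : S × A → ℝ := fun p => max (u p) 0 with hupdef
  set a : ℕ → ℝ := fun t => γ ^ t * (up ᵥ* (P * M) ^ t) q with hadef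
  have hc : up ᵥ* (flowB - γ • P) = (fun x => ∑ b, up (x, b)) - γ • (up ᵥ* P) := by
    rw [Matrix.vecMul_sub, vecMul_flowB]
    congr 1
    funext x
    simp [Matrix.vecMul, dotProduct, Matrix.smul_apply, smul_eq_mul, Finset.mul_sum,
      mul_left_comm]
  have hterm : ∀ t : ℕ, γ ^ t * ((up ᵥ* (flowB - γ • P)) ᵥ* (M * (P * M) ^ t)) q =
      a t - a (t + 1) := by
    intro t
    have hk : ((fun x => ∑ b, up (x, b)) : S → ℝ) ᵥ* M = up := by
      simp only [hupdef, hMdef]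
      exact key_id u
    have h1 : ((fun x => ∑ b, up (x, b)) : S → ℝ) ᵥ* (M * (P * M) ^ t) =
        up ᵥ* (P * M) ^ t := by
      rw [← Matrix.vecMul_vecMul, hk]
    have h2 : (γ • (up ᵥ* P)) ᵥ* (M * (P * M) ^ t) = γ • (up ᵥ* (P * M) ^ (t + 1)) := by
      rw [Matrix.smul_vecMul, Matrix.vecMul_vecMul, ← Matrix.mul_assoc, ← pow_succ']
    rw [hc, Matrix.sub_vecMul, h1, h2]
    simp only [Pi.sub_apply, Pi.smul_apply, smul_eq_mul]
    rw [hadef]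
    ring
  have hUb : ∀ t : ℕ, |a t| ≤ (∑ p, |up p|) * γ ^ t := by
    intro t
    calc |a t| = γ ^ t * |(up ᵥ* (P * M) ^ t) q| := by
          rw [hadef]; simp only; rw [abs_mul, abs_pow, abs_of_nonneg hγ0]
      _ ≤ γ ^ t * ∑ p, |up p| := mul_le_mul_of_nonneg_left
          (abs_vecMul_le_s5 (hPMt t).1 ((hPMt t).entry_le_one) up q) (pow_nonneg hγ0 t)
      _ = (∑ p, |up p|) * γ ^ t := mul_comm _ _
  have hsummable : Summable (fun t => a t - a (t + 1)) := by
    refine Summable.of_norm_bounded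
      ((summable_geometric_of_lt_one hγ0 hγ1).mul_left (2 * ∑ p, |up p|)) fun t => ?_
    have h1 := hUb t
    have h2 : |a (t + 1)| ≤ (∑ p, |up p|) * γ ^ t := by
      refine (hUb (t + 1)).trans ?_
      refine mul_le_mul_of_nonneg_left ?_ (Finset.sum_nonneg fun p _ => abs_nonneg _)
      exact pow_le_pow_of_le_one hγ0 hγ1.le (Nat.le_succ t)
    calc ‖a t - a (t + 1)‖ ≤ |a t| + |a (t + 1)| := abs_sub _ _
      _ ≤ 2 * (∑ p, |up p|) * γ ^ t := by nlinarith
  have hatend : Filter.Tendsto a Filter.atTop (nhds 0) := by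
    refine squeeze_zero_norm hUb ?_
    have := (tendsto_pow_atTop_nhds_zero_of_lt_one hγ0 hγ1).const_mul (∑ p, |up p|)
    simpa using this
  have hsum : HasSum (fun t => a t - a (t + 1)) (up q) := by
    rw [hasSum_iff_tendsto_nat_of_summable_norm
      (by simpa using hsummable.abs : Summable fun t => ‖a t - a (t + 1)‖)]
    have heq : ∀ n : ℕ, ∑ t ∈ Finset.range n, (a t - a (t + 1)) = a 0 - a n := fun n =>
      Finset.sum_range_sub' a n
    simp only [heq]
    have ha0 : a 0 = up q := by
      rw [hadef]; simp [Matrix.vecMul_one]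
    rw [← ha0]
    simpa using Filter.Tendsto.const_sub (a 0) hatend
  have hfun : (fun t : ℕ => γ ^ t * ((up ᵥ* (flowB - γ • P)) ᵥ* (M * (P * M) ^ t)) q) =
      fun t => a t - a (t + 1) := funext hterm
  rw [hfun, show max (u q) 0 = up q from by rw [hupdef]]
  exact hsum

/-- For any `u ∈ ℝ^{|S||A|}`, the occupancy measure of `π_u` satisfies
`‖μ^{π_u} - [u]₊‖₁ ≤ ((1+γ)‖[u]₋‖₁ + ‖(B - γP)ᵀ u - ν₀‖₁) / (1 - γ)`. -/
theorem occupancy_measure_pos_part_bound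
    {S A : Type*} [Fintype S] [Fintype A] [DecidableEq S] [DecidableEq A] [Nonempty A]
    (P : Matrix (S × A) S ℝ) (ν0 : S → ℝ) (γ : ℝ)
    (hγ : 0 < γ ∧ γ < 1)
    (hP : ∀ q x, 0 ≤ P q x) (hPs : ∀ q, ∑ x, P q x = 1)
    (hν : ∀ x, 0 ≤ ν0 x) (hνs : ∑ x, ν0 x = 1)
    (u : S × A → ℝ) (μu : S × A → ℝ)
    (hμ : ∀ q, μu q = ∑' t : ℕ,
        γ ^ t * (ν0 ᵥ* (policyMatrix (posPolicy u) * (P * policyMatrix (posPolicy u)) ^ t)) q) :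
    ∑ q : S × A, |μu q - max (u q) 0| ≤
      ((1 + γ) * ∑ q : S × A, max 0 (-(u q)) +
        ∑ x : S, |((flowB - γ • P)ᵀ *ᵥ u) x - ν0 x|) / (1 - γ) := by
  obtain ⟨hγ0, hγ1⟩ := hγ
  have hγ0' : (0:ℝ) ≤ γ := hγ0.le
  have h1γ : (0:ℝ) < 1 - γ := by linarith
  have hM : IsStoch (policyMatrix (posPolicy u)) :=
    policyMatrix_stoch _ (fun x a => (posPolicy_stoch u x).1 a) fun x => (posPolicy_stoch u x).2
  have hPst : IsStoch P := ⟨hP, hPs⟩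
  set w : S → ℝ := ν0 - (fun p => max (u p) 0) ᵥ* (flowB - γ • P) with hwdef
  have hpoint : ∀ q : S × A, μu q - max (u q) 0 = ∑' t : ℕ,
      γ ^ t * (w ᵥ* (policyMatrix (posPolicy u) * (P * policyMatrix (posPolicy u)) ^ t)) q := by
    intro q
    have hf : HasSum (fun t : ℕ => γ ^ t *
        (ν0 ᵥ* (policyMatrix (posPolicy u) * (P * policyMatrix (posPolicy u)) ^ t)) q)
        (μu q) := by
      rw [hμ q]
      exact (summable_series hM hPst hγ0' hγ1 ν0 q).hasSum
    have hg := hasSum_posPart hPst hγ0' hγ1 u q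
    have hsub := hf.sub hg
    have hfun : (fun t : ℕ => γ ^ t *
          (ν0 ᵥ* (policyMatrix (posPolicy u) * (P * policyMatrix (posPolicy u)) ^ t)) q -
        γ ^ t * (((fun p => max (u p) 0) ᵥ* (flowB - γ • P)) ᵥ*
          (policyMatrix (posPolicy u) * (P * policyMatrix (posPolicy u)) ^ t)) q) =
        fun t : ℕ => γ ^ t *
          (w ᵥ* (policyMatrix (posPolicy u) * (P * policyMatrix (posPolicy u)) ^ t)) q := by
      funext t
      rw [hwdef, Matrix.sub_vecMul]
      simp only [Pi.sub_apply]
      ring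
    rw [hfun] at hsub
    exact hsub.tsum_eq.symm
  have hW : ∑ x, |w x| ≤ (1 + γ) * (∑ q : S × A, max 0 (-(u q))) +
      ∑ x : S, |((flowB - γ • P)ᵀ *ᵥ u) x - ν0 x| := by
    have hup_eq : (fun p : S × A => max (u p) 0) = u + fun p => max 0 (-(u p)) := by
      funext p
      simp only [Pi.add_apply]
      rcases le_total (u p) 0 with h | h
      · rw [max_eq_right h, max_eq_right (neg_nonneg.mpr h)]; ring
      · rw [max_eq_left h, max_eq_left (neg_nonpos.mpr h)]; ring
    have hwx : ∀ x : S, w x = -((u ᵥ* (flowB - γ • P)) x - ν0 x) -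
        ((fun p : S × A => max 0 (-(u p))) ᵥ* (flowB - γ • P)) x := by
      intro x
      rw [hwdef]
      simp only [Pi.sub_apply]
      rw [hup_eq, Matrix.add_vecMul]
      simp only [Pi.add_apply]
      ring
    have hnn : ∀ q : S × A, (0:ℝ) ≤ max 0 (-(u q)) := fun q => le_max_left _ _
    have hBbound : ∑ x : S, |((fun p : S × A => max 0 (-(u p))) ᵥ* (flowB - γ • P)) x| ≤
        (1 + γ) * ∑ q : S × A, max 0 (-(u q)) := by
      calc ∑ x : S, |((fun p : S × A => max 0 (-(u p))) ᵥ* (flowB - γ • P)) x|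
          ≤ ∑ x : S, ∑ q : S × A, max 0 (-(u q)) * |((flowB - γ • P) : Matrix (S × A) S ℝ) q x| := by
            refine Finset.sum_le_sum fun x _ => ?_
            simp only [Matrix.vecMul, dotProduct]
            refine (Finset.abs_sum_le_sum_abs _ _).trans (Finset.sum_le_sum fun q _ => ?_)
            rw [abs_mul, abs_of_nonneg (hnn q)]
        _ = ∑ q : S × A, max 0 (-(u q)) * ∑ x, |((flowB - γ • P) : Matrix (S × A) S ℝ) q x| := by
            rw [Finset.sum_comm]
            exact Finset.sum_congr rfl fun q _ => (Finset.mul_sum _ _ _).symm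
        _ ≤ ∑ q : S × A, max 0 (-(u q)) * (1 + γ) := by
            refine Finset.sum_le_sum fun q _ => mul_le_mul_of_nonneg_left ?_ (hnn q)
            calc ∑ x, |((flowB - γ • P) : Matrix (S × A) S ℝ) q x| ≤ ∑ x, ((flowB : Matrix (S × A) S ℝ) q x + γ * P q x) := by
                  refine Finset.sum_le_sum fun x _ => ?_
                  simp only [Matrix.sub_apply, Matrix.smul_apply, smul_eq_mul]
                  refine (abs_sub _ _).trans ?_
                  rw [abs_of_nonneg (show (0:ℝ) ≤ (flowB : Matrix (S × A) S ℝ) q x from by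
                        unfold flowB; split <;> norm_num),
                    abs_of_nonneg (mul_nonneg hγ0' (hP q x))]
              _ = 1 + γ := by
                  rw [Finset.sum_add_distrib, flowB_rowsum, ← Finset.mul_sum, hPs q, mul_one]
        _ = (1 + γ) * ∑ q : S × A, max 0 (-(u q)) := by
            rw [← Finset.sum_mul]; ring
    calc ∑ x, |w x|
        ≤ ∑ x : S, (|(u ᵥ* (flowB - γ • P)) x - ν0 x| +
            |((fun p : S × A => max 0 (-(u p))) ᵥ* (flowB - γ • P)) x|) := by
          refine Finset.sum_le_sum fun x _ => ?_
          rw [hwx x]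
          exact (abs_sub _ _).trans (by rw [abs_neg])
      _ = (∑ x : S, |(u ᵥ* (flowB - γ • P)) x - ν0 x|) +
          ∑ x : S, |((fun p : S × A => max 0 (-(u p))) ᵥ* (flowB - γ • P)) x| :=
          Finset.sum_add_distrib
      _ ≤ (1 + γ) * (∑ q : S × A, max 0 (-(u q))) +
          ∑ x : S, |((flowB - γ • P)ᵀ *ᵥ u) x - ν0 x| := by
          have heq : ∀ x : S, ((flowB - γ • P)ᵀ *ᵥ u) x = (u ᵥ* (flowB - γ • P)) x := by
            intro x; rw [Matrix.mulVec_transpose]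
          simp only [heq]
          linarith [hBbound]
  calc ∑ q : S × A, |μu q - max (u q) 0|
      = ∑ q : S × A, |∑' t : ℕ, γ ^ t *
          (w ᵥ* (policyMatrix (posPolicy u) * (P * policyMatrix (posPolicy u)) ^ t)) q| :=
        Finset.sum_congr rfl fun q _ => by rw [hpoint q]
    _ ≤ (∑ x, |w x|) * (1 - γ)⁻¹ := l1_tsum_bound hM hPst hγ0' hγ1 w
    _ ≤ ((1 + γ) * (∑ q : S × A, max 0 (-(u q))) +
          ∑ x : S, |((flowB - γ • P)ᵀ *ᵥ u) x - ν0 x|) * (1 - γ)⁻¹ :=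
        mul_le_mul_of_nonneg_right hW (inv_nonneg.mpr h1γ.le)
    _ = ((1 + γ) * (∑ q : S × A, max 0 (-(u q))) +
          ∑ x : S, |((flowB - γ • P)ᵀ *ᵥ u) x - ν0 x|) / (1 - γ) :=
        (div_eq_mul_inv _ _).symm
end
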